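/- arXiv:math-ph/0207027 — 3 statements merged into one kernel-verified Lean document; each statement's English description precedes it below -/
import Mathlib

section
/- Let P(t) be a differentiable family of projections with derivative P'(t), let F(t) = [P'(t), P(t)], and let U(t) be the solution of dU/dt = F(t)U with U(0) = 1. Then P(t)U(t) = U(t)P(0) for all t; consequently P(t) = U(t)P(0)U(t)⁻¹. -/
/-!
Differentiating `P² = P` gives `P' = P'P + PP'`, hence `PP'P = 0` and `⁅⁅P', P⁆, P⁆ = P'`.
Since `U' = ⁅P', P⁆ U`, the conjugate `U⁻¹ P U` has derivative
`U⁻¹ (P' - ⁅⁅P', P⁆, P⁆) U = 0`, so it is constantly `P 0`.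
-/

open scoped Topology

namespace IsIdempotentElem

variable {R : Type*} [Ring R] {p d : R}

theorem mul_mul_eq_zero_of_mul_add_mul_eq (hp : IsIdempotentElem p) (hd : d * p + p * d = d) :
    p * d * p = 0 := by
  have h : p * d * p + p * d = p * d := by
    calc p * d * p + p * d = p * d * p + p * p * d := by rw [hp.eq]
      _ = p * (d * p + p * d) := by noncomm_ring
      _ = p * d := by rw [hd]
  simpa using h

theorem lie_lie_eq_of_mul_add_mul_eq (hp : IsIdempotentElem p) (hd : d * p + p * d = d) :
    ⁅⁅d, p⁆, p⁆ = d := by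
  have h0 := hp.mul_mul_eq_zero_of_mul_add_mul_eq hd
  calc ⁅⁅d, p⁆, p⁆ = d * (p * p) + p * p * d - 2 * (p * d * p) := by
        simp only [Ring.lie_def]; noncomm_ring
    _ = d := by rw [hp.eq, h0, mul_zero, sub_zero, hd]

end IsIdempotentElem

section NormedAlgebra

variable {𝕜 R : Type*} [NontriviallyNormedField 𝕜] [NormedRing R] [NormedAlgebra 𝕜 R]

theorem HasDerivAt.mul_add_mul_eq_of_isIdempotentElem {P : 𝕜 → R} {P' : R} {t : 𝕜}
    (hP : HasDerivAt P P' t) (hproj : ∀ᶠ s in 𝓝 t, IsIdempotentElem (P s)) :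
    P' * P t + P t * P' = P' :=
  ((hP.mul hP).congr_of_eventuallyEq (hproj.mono fun _ hs => hs.symm)).unique hP

variable [HasSummableGeomSeries R]

theorem HasDerivAt.ring_inverse {U : 𝕜 → R} {U' : R} {t : 𝕜} (hU : HasDerivAt U U' t)
    (ht : IsUnit (U t)) :
    HasDerivAt (fun s => Ring.inverse (U s))
      (-(Ring.inverse (U t) * U' * Ring.inverse (U t))) t := by
  obtain ⟨u, hu⟩ := ht
  have hinv := hasFDerivAt_ringInverse (𝕜 := 𝕜) u
  rw [hu] at hinv
  rw [← hu, Ring.inverse_unit]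
  exact (hinv.comp_hasDerivAt t hU).congr_deriv (by simp)

theorem HasDerivAt.ring_inverse_mul_mul {U P : 𝕜 → R} {F P' : R} {t : 𝕜}
    (hU : HasDerivAt U (F * U t) t) (hP : HasDerivAt P P' t) (ht : IsUnit (U t)) :
    HasDerivAt (fun s => Ring.inverse (U s) * P s * U s)
      (Ring.inverse (U t) * (P' - ⁅F, P t⁆) * U t) t := by
  refine (((hU.ring_inverse ht).mul hP).mul hU).congr_deriv ?_
  have hUV : U t * Ring.inverse (U t) = 1 := Ring.mul_inverse_cancel _ ht
  set V := Ring.inverse (U t)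
  rw [Pi.mul_apply, Ring.lie_def]
  calc _ = -(V * F * (U t * V) * P t * U t) + V * P' * U t + V * P t * (F * U t) := by
        noncomm_ring
    _ = _ := by rw [hUV]; noncomm_ring

end NormedAlgebra

theorem kato_intertwining_general
    {H : Type*} [NormedAddCommGroup H] [InnerProductSpace ℂ H] [CompleteSpace H]
    (P P' U : ℝ → (H →L[ℂ] H))
    (hproj : ∀ t, P t * P t = P t)
    (hP : ∀ t, HasDerivAt P (P' t) t)
    (hU : ∀ t, HasDerivAt U ((P' t * P t - P t * P' t) * U t) t)
    (hU0 : U 0 = 1)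
    (hUunit : ∀ t, IsUnit (U t)) :
    ∀ t, P t * U t = U t * P 0 ∧ P t = U t * P 0 * Ring.inverse (U t) := by
  have hconj : ∀ t, HasDerivAt (fun s => Ring.inverse (U s) * P s * U s) 0 t := fun t => by
    have hP' : ⁅⁅P' t, P t⁆, P t⁆ = P' t :=
      IsIdempotentElem.lie_lie_eq_of_mul_add_mul_eq (hproj t)
        ((hP t).mul_add_mul_eq_of_isIdempotentElem (.of_forall hproj))
    simpa [← Ring.lie_def, hP'] using (hU t).ring_inverse_mul_mul (hP t) (hUunit t)
  have hconst : ∀ t, Ring.inverse (U t) * P t * U t = P 0 := fun t => by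
    simpa [hU0] using is_const_of_deriv_eq_zero (fun s => (hconj s).differentiableAt)
      (fun s => (hconj s).deriv) t 0
  intro t
  have hintertwine : P t * U t = U t * P 0 := by
    rw [← hconst t, ← mul_assoc, ← mul_assoc, Ring.mul_inverse_cancel _ (hUunit t), one_mul]
  refine ⟨hintertwine, ?_⟩
  rw [← hintertwine, mul_assoc, Ring.mul_inverse_cancel _ (hUunit t), mul_one]

/-- Kato's intertwining construction: if `P` is a differentiable family of
projections with derivative `P'`, `F t = [P' t, P t]`, and `U` solves
`U' = F U` with `U 0 = 1` and each `U t` invertible, then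
`P t * U t = U t * P 0`, hence `P t = U t * P 0 * (U t)⁻¹`. -/
theorem kato_intertwining
    {H : Type*} [NormedAddCommGroup H] [InnerProductSpace ℂ H] [CompleteSpace H]
    (P P' U : ℝ → (H →L[ℂ] H))
    (hproj : ∀ t, P t * P t = P t)
    (hsa : ∀ t, IsSelfAdjoint (P t))
    (hP : ∀ t, HasDerivAt P (P' t) t)
    (hPcont : Continuous P')
    (hU : ∀ t, HasDerivAt U ((P' t * P t - P t * P' t) * U t) t)
    (hU0 : U 0 = 1)
    (hUunit : ∀ t, IsUnit (U t)) :
    ∀ t, P t * U t = U t * P 0 ∧ P t = U t * P 0 * Ring.inverse (U t) :=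
  kato_intertwining_general P P' U hproj hP hU hU0 hUunit
end

section
/- Let H = H₀ + V be self-adjoint where H₀ ≥ 0 and V is bounded, and let v be an operator with v†v ≤ (2/m)(H₀ + w) for constants m > 0 and w ≥ 0 (in the sense of quadratic forms). Then for z not in the spectrum of H, the operator v(z−H)⁻¹ is bounded with ‖v(z−H)⁻¹‖² ≤ (2/m)[1/d + (|z| + ‖V‖ + w)/d²], where d = dist(z, spec H). -/
/-!
Put `ψ = (z - H)⁻¹ φ`. Then `Hψ = zψ - φ`, so
`Re ⟨ψ, H₀ψ⟩ = Re ⟨ψ, Hψ⟩ - Re ⟨ψ, Vψ⟩ ≤ ‖ψ‖ ‖φ‖ + (|z| + ‖V‖) ‖ψ‖²`.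
Feeding this into the form bound for `v` and using `‖ψ‖ ≤ ‖φ‖ / d`, which the continuous
functional calculus gives for the resolvent of the self-adjoint `H`, bounds `‖v ψ‖²` by the
claimed constant times `‖φ‖²`.
-/

open scoped InnerProductSpace

theorem norm_resolvent_le_inv_infDist {A : Type*} [CStarAlgebra A] (a : A) [IsStarNormal a]
    {z : ℂ} (hd : 0 < Metric.infDist z (spectrum ℂ a)) :
    ‖resolvent a z‖ ≤ (Metric.infDist z (spectrum ℂ a))⁻¹ := by
  have hne : ∀ x ∈ spectrum ℂ a, z - x ≠ 0 := fun x hx hzx =>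
    hd.ne' (Metric.infDist_zero_of_mem (sub_eq_zero.mp hzx ▸ hx))
  have hcfc : resolvent a z = cfc (fun x : ℂ => (z - x)⁻¹) a := by
    rw [cfc_inv _ a hne, cfc_sub .., cfc_const z a, cfc_id' ℂ a]; rfl
  rw [hcfc]
  refine norm_cfc_le (inv_nonneg.mpr hd.le) fun x hx => ?_
  rw [norm_inv, ← dist_eq_norm]
  exact inv_anti₀ hd (Metric.infDist_le_dist_of_mem hx)

theorem re_inner_apply_self_le {E : Type*} [NormedAddCommGroup E] [InnerProductSpace ℂ E]
    (T V : E →L[ℂ] E) (z : ℂ) (ψ : E) :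
    (⟪ψ, T ψ⟫_ℂ).re ≤ ‖ψ‖ * ‖z • ψ - (T + V) ψ‖ + (‖z‖ + ‖V‖) * ‖ψ‖ ^ 2 := by
  have hsplit : T ψ = z • ψ + -(z • ψ - (T + V) ψ) + -V ψ := by
    rw [add_apply]; abel
  calc (⟪ψ, T ψ⟫_ℂ).re
      = (⟪ψ, z • ψ⟫_ℂ).re + (⟪ψ, -(z • ψ - (T + V) ψ)⟫_ℂ).re + (⟪ψ, -V ψ⟫_ℂ).re := by
        rw [hsplit, inner_add_right, inner_add_right, Complex.add_re, Complex.add_re]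
    _ ≤ ‖ψ‖ * ‖z • ψ‖ + ‖ψ‖ * ‖z • ψ - (T + V) ψ‖ + ‖ψ‖ * (‖V‖ * ‖ψ‖) := by
        gcongr
        · exact re_inner_le_norm (𝕜 := ℂ) ψ _
        · exact (re_inner_le_norm (𝕜 := ℂ) ψ _).trans_eq (by rw [norm_neg])
        · refine (re_inner_le_norm (𝕜 := ℂ) ψ _).trans ?_
          rw [norm_neg]
          gcongr
          exact V.le_opNorm ψ
    _ = ‖ψ‖ * ‖z • ψ - (T + V) ψ‖ + (‖z‖ + ‖V‖) * ‖ψ‖ ^ 2 := by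
        rw [norm_smul]; ring

theorem ContinuousLinearMap.opNorm_sq_le_of_forall_norm_sq_le {𝕜 E F : Type*}
    [NontriviallyNormedField 𝕜] [SeminormedAddCommGroup E] [SeminormedAddCommGroup F]
    [NormedSpace 𝕜 E] [NormedSpace 𝕜 F] (f : E →L[𝕜] F) {C : ℝ} (hC : 0 ≤ C)
    (h : ∀ x, ‖f x‖ ^ 2 ≤ C * ‖x‖ ^ 2) : ‖f‖ ^ 2 ≤ C := by
  have hf : ‖f‖ ≤ √C := f.opNorm_le_bound (Real.sqrt_nonneg C) fun x => by
    rw [← pow_le_pow_iff_left₀ (norm_nonneg _) (by positivity) two_ne_zero, mul_pow,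
      Real.sq_sqrt hC]
    exact h x
  calc ‖f‖ ^ 2 ≤ √C ^ 2 := by gcongr
    _ = C := Real.sq_sqrt hC

theorem velocity_resolvent_bound_general
    {H : Type*} [NormedAddCommGroup H] [InnerProductSpace ℂ H] [CompleteSpace H]
    (Hop0 V v : H →L[ℂ] H) (m w : ℝ) (hm : 0 < m) (hw : 0 ≤ w)
    (hH0 : IsSelfAdjoint Hop0) (hV : IsSelfAdjoint V)
    (hform : ∀ ψ : H,
      ‖v ψ‖ ^ 2 ≤ (2 / m) * ((inner ℂ ψ (Hop0 ψ) : ℂ).re + w * ‖ψ‖ ^ 2))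
    (z : ℂ)
    (hd : 0 < Metric.infDist z (spectrum ℂ (Hop0 + V))) :
    ‖v * Ring.inverse (algebraMap ℂ (H →L[ℂ] H) z - (Hop0 + V))‖ ^ 2
      ≤ (2 / m) * (1 / Metric.infDist z (spectrum ℂ (Hop0 + V))
          + (‖z‖ + ‖V‖ + w) / Metric.infDist z (spectrum ℂ (Hop0 + V)) ^ 2) := by
  set d := Metric.infDist z (spectrum ℂ (Hop0 + V))
  have : IsStarNormal (Hop0 + V) := (hH0.add hV).isStarNormal
  have hR : ‖resolvent (Hop0 + V) z‖ ≤ d⁻¹ := norm_resolvent_le_inv_infDist _ hd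
  have hsolve : ∀ φ,
      z • resolvent (Hop0 + V) z φ - (Hop0 + V) (resolvent (Hop0 + V) z φ) = φ := by
    have hz : z ∉ spectrum ℂ (Hop0 + V) := fun h => hd.ne' (Metric.infDist_zero_of_mem h)
    intro φ
    simpa [resolvent, Algebra.algebraMap_eq_smul_one] using
      congr($(Ring.mul_inverse_cancel _ (spectrum.notMem_iff.mp hz)) φ)
  refine ContinuousLinearMap.opNorm_sq_le_of_forall_norm_sq_le _ (by positivity) fun φ => ?_
  set ψ := resolvent (Hop0 + V) z φ
  have hψ : ‖ψ‖ ≤ d⁻¹ * ‖φ‖ := (resolvent (Hop0 + V) z).le_of_opNorm_le hR φ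
  calc ‖v ψ‖ ^ 2 ≤ (2 / m) * ((⟪ψ, Hop0 ψ⟫_ℂ).re + w * ‖ψ‖ ^ 2) := hform ψ
    _ ≤ (2 / m) * (‖ψ‖ * ‖φ‖ + (‖z‖ + ‖V‖ + w) * ‖ψ‖ ^ 2) := by
      have := re_inner_apply_self_le Hop0 V z ψ
      rw [hsolve] at this
      gcongr (2 / m) * ?_
      linarith
    _ ≤ (2 / m) * (d⁻¹ * ‖φ‖ * ‖φ‖ + (‖z‖ + ‖V‖ + w) * (d⁻¹ * ‖φ‖) ^ 2) := by gcongr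
    _ = (2 / m) * (1 / d + (‖z‖ + ‖V‖ + w) / d ^ 2) * ‖φ‖ ^ 2 := by ring

/-- Resolvent regularization bound: if `H = H₀ + V` with `H₀ ≥ 0` self-adjoint
and `V` bounded self-adjoint, and `v` satisfies the form bound
`‖vψ‖² ≤ (2/m)(⟨ψ, H₀ψ⟩ + w‖ψ‖²)`, then for `z ∉ spec H`,
`‖v (z-H)⁻¹‖² ≤ (2/m)(1/d + (|z| + ‖V‖ + w)/d²)` with `d = dist(z, spec H)`. -/
theorem velocity_resolvent_bound
    {H : Type*} [NormedAddCommGroup H] [InnerProductSpace ℂ H] [CompleteSpace H]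
    (Hop0 V v : H →L[ℂ] H) (m w : ℝ) (hm : 0 < m) (hw : 0 ≤ w)
    (hH0 : IsSelfAdjoint Hop0) (hV : IsSelfAdjoint V)
    (hpos : ∀ ψ : H, 0 ≤ (inner ℂ ψ (Hop0 ψ) : ℂ).re)
    (hform : ∀ ψ : H,
      ‖v ψ‖ ^ 2 ≤ (2 / m) * ((inner ℂ ψ (Hop0 ψ) : ℂ).re + w * ‖ψ‖ ^ 2))
    (z : ℂ) (hz : z ∉ spectrum ℂ (Hop0 + V))
    (hd : 0 < Metric.infDist z (spectrum ℂ (Hop0 + V))) :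
    ‖v * Ring.inverse (algebraMap ℂ (H →L[ℂ] H) z - (Hop0 + V))‖ ^ 2
      ≤ (2 / m) * (1 / Metric.infDist z (spectrum ℂ (Hop0 + V))
          + (‖z‖ + ‖V‖ + w) / Metric.infDist z (spectrum ℂ (Hop0 + V)) ^ 2) :=
  velocity_resolvent_bound_general Hop0 V v m w hm hw hH0 hV hform z hd
end

section
/- Let Q, Q' be orthogonal projections of equal finite rank N with derivative-type operators Q_x, Q_x' and Q_y, Q_y' satisfying Q_i = Q Q_i + Q_i Q (and similarly for primes), and suppose ‖Q' − Q‖ ≤ ε₀, ‖Q_i' − Q_i‖ ≤ ε_i, with all ‖Q_i‖, ‖Q_i'‖ ≤ C. Then |Tr[Q'Q_x'Q_y'] − Tr[QQ_xQ_y]| ≤ N(2C²ε₀ + Cε_x + Cε_y). -/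
open Module

open LinearMap
open scoped InnerProductSpace

lemma trace_proj_mul_norm_le
    {H : Type*} [NormedAddCommGroup H] [InnerProductSpace ℂ H]
    [FiniteDimensional ℂ H]
    (P M : H →L[ℂ] H) (N : ℕ)
    (hproj : P * P = P) (hsa : IsSelfAdjoint P)
    (hrank : finrank ℂ (LinearMap.range (P : H →ₗ[ℂ] H)) = N) :
    ‖LinearMap.trace ℂ H ((P * M : H →L[ℂ] H) : H →ₗ[ℂ] H)‖ ≤ N * ‖M‖ := by
  set K := LinearMap.range (P : H →ₗ[ℂ] H) with hK
  -- P fixes K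
  have hfix : ∀ x : H, x ∈ K → P x = x := by
    rintro x ⟨y, rfl⟩
    have := congrArg (fun (T : H →L[ℂ] H) => T y) hproj
    simpa using this
  have hPadj : ∀ x y : H, ⟪x, P y⟫_ℂ = ⟪P x, y⟫_ℂ := by
    intro x y
    rw [← hsa.adjoint_eq, ContinuousLinearMap.adjoint_inner_left, hsa.adjoint_eq]
  -- replace P*M by P*M*P inside trace
  have e1 : LinearMap.trace ℂ H ((P * M : H →L[ℂ] H) : H →ₗ[ℂ] H)
      = LinearMap.trace ℂ H ((P * M * P : H →L[ℂ] H) : H →ₗ[ℂ] H) := by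
    have h2 : ((P * M * P : H →L[ℂ] H) : H →ₗ[ℂ] H)
        = ((P * M : H →L[ℂ] H) : H →ₗ[ℂ] H) * (P : H →ₗ[ℂ] H) := rfl
    have h3 : (P : H →ₗ[ℂ] H) * ((P * M : H →L[ℂ] H) : H →ₗ[ℂ] H)
        = ((P * (P * M) : H →L[ℂ] H) : H →ₗ[ℂ] H) := rfl
    rw [h2, ← LinearMap.trace_mul_comm, h3, ← mul_assoc, hproj]
  set f : H →ₗ[ℂ] H := ((P * M * P : H →L[ℂ] H) : H →ₗ[ℂ] H) with hf
  have hmem : ∀ x : H, f x ∈ K := by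
    intro x
    exact ⟨M (P x), rfl⟩
  set g : H →ₗ[ℂ] K := f.codRestrict K hmem with hg
  have hcomp : K.subtype ∘ₗ g = f := LinearMap.subtype_comp_codRestrict (f := f) K hmem
  have e2 : LinearMap.trace ℂ H f = LinearMap.trace ℂ K (g ∘ₗ K.subtype) := by
    rw [← hcomp, LinearMap.trace_comp_comm']
  rw [e1, e2]
  set h : K →ₗ[ℂ] K := g ∘ₗ K.subtype with hh
  set b := stdOrthonormalBasis ℂ K with hb
  have e3 : LinearMap.trace ℂ K h = ∑ i, ⟪(b i : K), h (b i)⟫_ℂ := by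
    rw [LinearMap.trace_eq_matrix_trace ℂ b.toBasis, Matrix.trace]
    congr 1
    ext i
    rw [Matrix.diag_apply, LinearMap.toMatrix_apply, b.coe_toBasis,
      b.coe_toBasis_repr_apply, b.repr_apply_apply]
  rw [e3]
  have hterm : ∀ i, ‖⟪(b i : K), h (b i)⟫_ℂ‖ ≤ ‖M‖ := by
    intro i
    have hbiK : ((b i : K) : H) ∈ K := (b i).2
    have hval : ((h (b i) : K) : H) = P (M (P ((b i : K) : H))) := rfl
    have : ⟪(b i : K), h (b i)⟫_ℂ = ⟪((b i : K) : H), P (M (P ((b i : K) : H)))⟫_ℂ := by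
      rw [← hval]; rfl
    rw [this, hPadj, hfix _ hbiK]
    calc ‖⟪((b i : K) : H), M ((b i : K) : H)⟫_ℂ‖
        ≤ ‖((b i : K) : H)‖ * ‖M ((b i : K) : H)‖ := norm_inner_le_norm _ _
      _ ≤ ‖((b i : K) : H)‖ * (‖M‖ * ‖((b i : K) : H)‖) :=
          mul_le_mul_of_nonneg_left (M.le_opNorm _) (norm_nonneg _)
      _ = ‖M‖ := by
          have hnorm : ‖((b i : K) : H)‖ = 1 := by
            rw [← Submodule.coe_norm]
            exact b.orthonormal.1 i
          rw [hnorm]; ring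
  calc ‖∑ i, ⟪(b i : K), h (b i)⟫_ℂ‖ ≤ ∑ i, ‖⟪(b i : K), h (b i)⟫_ℂ‖ :=
        norm_sum_le _ _
    _ ≤ ∑ _i : Fin (finrank ℂ K), ‖M‖ := Finset.sum_le_sum fun i _ => hterm i
    _ = (finrank ℂ K : ℝ) * ‖M‖ := by rw [Finset.sum_const, Finset.card_univ, Fintype.card_fin, nsmul_eq_mul]
    _ = N * ‖M‖ := by rw [hrank]

/-- Lipschitz estimate for the Chern-character trace: if `Q, Q'` are rank-`N`
orthogonal projections, `Q_x, Q_y, Q_x', Q_y'` are "derivative-type" operators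
(`Q_i = Q Q_i + Q_i Q`, etc.) with norms at most `C`, and
`‖Q'-Q‖ ≤ ε₀`, `‖Q_x'-Q_x‖ ≤ ε_x`, `‖Q_y'-Q_y‖ ≤ ε_y`, then
`|Tr[Q'Q_x'Q_y'] - Tr[QQ_xQ_y]| ≤ N(2C²ε₀ + Cε_x + Cε_y)`. -/
theorem trace_triple_product_difference_bound
    {H : Type*} [NormedAddCommGroup H] [InnerProductSpace ℂ H]
    [FiniteDimensional ℂ H]
    (Q Q' Qx Qy Qx' Qy' : H →L[ℂ] H) (N : ℕ) (C ε₀ εx εy : ℝ)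
    (hQproj : Q * Q = Q) (hQsa : IsSelfAdjoint Q)
    (hQ'proj : Q' * Q' = Q') (hQ'sa : IsSelfAdjoint Q')
    (hrank : finrank ℂ (LinearMap.range (Q : H →ₗ[ℂ] H)) = N)
    (hrank' : finrank ℂ (LinearMap.range (Q' : H →ₗ[ℂ] H)) = N)
    (hQx : Qx = Q * Qx + Qx * Q) (hQy : Qy = Q * Qy + Qy * Q)
    (hQx' : Qx' = Q' * Qx' + Qx' * Q') (hQy' : Qy' = Q' * Qy' + Qy' * Q')
    (hCx : ‖Qx‖ ≤ C) (hCy : ‖Qy‖ ≤ C) (hCx' : ‖Qx'‖ ≤ C) (hCy' : ‖Qy'‖ ≤ C)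
    (h0 : ‖Q' - Q‖ ≤ ε₀) (hx : ‖Qx' - Qx‖ ≤ εx) (hy : ‖Qy' - Qy‖ ≤ εy) :
    ‖LinearMap.trace ℂ H ((Q' * Qx' * Qy' : H →L[ℂ] H) : H →ₗ[ℂ] H)
        - LinearMap.trace ℂ H ((Q * Qx * Qy : H →L[ℂ] H) : H →ₗ[ℂ] H)‖
      ≤ N * (2 * C ^ 2 * ε₀ + C * εx + C * εy) := by
  have hC0 : (0:ℝ) ≤ C := le_trans (norm_nonneg Qx) hCx
  have hε₀ : (0:ℝ) ≤ ε₀ := le_trans (norm_nonneg _) h0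
  have hεx : (0:ℝ) ≤ εx := le_trans (norm_nonneg _) hx
  have hεy : (0:ℝ) ≤ εy := le_trans (norm_nonneg _) hy
  set A : H →L[ℂ] H := Qx' * Qy' with hA
  have hAnorm : ‖A‖ ≤ C * C :=
    le_trans (norm_mul_le _ _) (mul_le_mul hCx' hCy' (norm_nonneg _) hC0)
  -- telescoping identity
  have key : Q' * Qx' * Qy' - Q * Qx * Qy
      = Q' * ((Q' - Q) * A) + ((Q' - Q) * Q) * A
        + Q * ((Qx' - Qx) * Qy') + Q * (Qx * (Qy' - Qy)) := by
    have h1 : Q' * ((Q' - Q) * A) + ((Q' - Q) * Q) * A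
        = (Q' * Q') * A - (Q * Q) * A := by noncomm_ring
    have h2 : Q * ((Qx' - Qx) * Qy') + Q * (Qx * (Qy' - Qy))
        = Q * (Qx' * Qy') - Q * (Qx * Qy) := by noncomm_ring
    have h3 : Q' * ((Q' - Q) * A) + ((Q' - Q) * Q) * A
        + Q * ((Qx' - Qx) * Qy') + Q * (Qx * (Qy' - Qy))
        = (Q' * Q') * A - (Q * Q) * A + (Q * (Qx' * Qy') - Q * (Qx * Qy)) := by
      rw [← h1, ← h2]; noncomm_ring
    rw [h3, hQproj, hQ'proj, hA]
    noncomm_ring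
  -- split the trace
  have hsplit : LinearMap.trace ℂ H ((Q' * Qx' * Qy' : H →L[ℂ] H) : H →ₗ[ℂ] H)
        - LinearMap.trace ℂ H ((Q * Qx * Qy : H →L[ℂ] H) : H →ₗ[ℂ] H)
      = LinearMap.trace ℂ H ((Q' * ((Q' - Q) * A) : H →L[ℂ] H) : H →ₗ[ℂ] H)
        + LinearMap.trace ℂ H ((((Q' - Q) * Q) * A : H →L[ℂ] H) : H →ₗ[ℂ] H)
        + LinearMap.trace ℂ H ((Q * ((Qx' - Qx) * Qy') : H →L[ℂ] H) : H →ₗ[ℂ] H)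
        + LinearMap.trace ℂ H ((Q * (Qx * (Qy' - Qy)) : H →L[ℂ] H) : H →ₗ[ℂ] H) := by
    have hc : ((Q' * Qx' * Qy' - Q * Qx * Qy : H →L[ℂ] H) : H →ₗ[ℂ] H)
        = ((Q' * Qx' * Qy' : H →L[ℂ] H) : H →ₗ[ℂ] H)
          - ((Q * Qx * Qy : H →L[ℂ] H) : H →ₗ[ℂ] H) := rfl
    have hc2 : ((Q' * ((Q' - Q) * A) + ((Q' - Q) * Q) * A
          + Q * ((Qx' - Qx) * Qy') + Q * (Qx * (Qy' - Qy)) : H →L[ℂ] H) : H →ₗ[ℂ] H)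
        = ((Q' * ((Q' - Q) * A) : H →L[ℂ] H) : H →ₗ[ℂ] H)
          + ((((Q' - Q) * Q) * A : H →L[ℂ] H) : H →ₗ[ℂ] H)
          + ((Q * ((Qx' - Qx) * Qy') : H →L[ℂ] H) : H →ₗ[ℂ] H)
          + ((Q * (Qx * (Qy' - Qy)) : H →L[ℂ] H) : H →ₗ[ℂ] H) := rfl
    rw [← map_sub, ← hc, key, hc2, map_add, map_add, map_add]
  -- cyclic rearrangement of the second term
  have cyc : LinearMap.trace ℂ H ((((Q' - Q) * Q) * A : H →L[ℂ] H) : H →ₗ[ℂ] H)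
      = LinearMap.trace ℂ H ((Q * (A * (Q' - Q)) : H →L[ℂ] H) : H →ₗ[ℂ] H) := by
    have r1 : ((((Q' - Q) * Q) * A : H →L[ℂ] H) : H →ₗ[ℂ] H)
        = (((Q' - Q) : H →L[ℂ] H) : H →ₗ[ℂ] H) * (Q : H →ₗ[ℂ] H) * (A : H →ₗ[ℂ] H) := rfl
    have r2 : ((Q * (A * (Q' - Q)) : H →L[ℂ] H) : H →ₗ[ℂ] H)
        = (Q : H →ₗ[ℂ] H) * ((A : H →ₗ[ℂ] H) * (((Q' - Q) : H →L[ℂ] H) : H →ₗ[ℂ] H)) := rfl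
    rw [r1, r2, LinearMap.trace_mul_cycle, ← mul_assoc, LinearMap.trace_mul_comm,
      ← mul_assoc]
  -- bound each term
  have b1 : ‖LinearMap.trace ℂ H ((Q' * ((Q' - Q) * A) : H →L[ℂ] H) : H →ₗ[ℂ] H)‖
      ≤ N * (ε₀ * (C * C)) := by
    refine le_trans (trace_proj_mul_norm_le Q' _ N hQ'proj hQ'sa hrank') ?_
    exact mul_le_mul_of_nonneg_left
      (le_trans (norm_mul_le _ _) (mul_le_mul h0 hAnorm (norm_nonneg _) hε₀))
      (Nat.cast_nonneg N)
  have b2 : ‖LinearMap.trace ℂ H ((Q * (A * (Q' - Q)) : H →L[ℂ] H) : H →ₗ[ℂ] H)‖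
      ≤ N * ((C * C) * ε₀) := by
    refine le_trans (trace_proj_mul_norm_le Q _ N hQproj hQsa hrank) ?_
    exact mul_le_mul_of_nonneg_left
      (le_trans (norm_mul_le _ _)
        (mul_le_mul hAnorm h0 (norm_nonneg _) (mul_nonneg hC0 hC0)))
      (Nat.cast_nonneg N)
  have b3 : ‖LinearMap.trace ℂ H ((Q * ((Qx' - Qx) * Qy') : H →L[ℂ] H) : H →ₗ[ℂ] H)‖
      ≤ N * (εx * C) := by
    refine le_trans (trace_proj_mul_norm_le Q _ N hQproj hQsa hrank) ?_
    exact mul_le_mul_of_nonneg_left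
      (le_trans (norm_mul_le _ _) (mul_le_mul hx hCy' (norm_nonneg _) hεx))
      (Nat.cast_nonneg N)
  have b4 : ‖LinearMap.trace ℂ H ((Q * (Qx * (Qy' - Qy)) : H →L[ℂ] H) : H →ₗ[ℂ] H)‖
      ≤ N * (C * εy) := by
    refine le_trans (trace_proj_mul_norm_le Q _ N hQproj hQsa hrank) ?_
    exact mul_le_mul_of_nonneg_left
      (le_trans (norm_mul_le _ _) (mul_le_mul hCx hy (norm_nonneg _) hC0))
      (Nat.cast_nonneg N)
  rw [hsplit, cyc]
  refine le_trans (norm_add_le _ _) ?_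
  refine le_trans (add_le_add (le_trans (norm_add_le _ _)
    (add_le_add (le_trans (norm_add_le _ _) (add_le_add b1 b2)) b3)) b4) ?_
  apply le_of_eq
  ring
end
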